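/- arXiv:1605.02619 — 9 statements merged into one kernel-verified Lean document; each statement's English description precedes it below -/
import Mathlib

section
/- Let ẇ > 0 and ŵ > 0 be real numbers, let f₀ ≥ f₁ > 0 be real rewards, and set z = ẇ/(ẇ+ŵ). Then z·(ẇ+f₁)/(ẇ+ŵ+f₁) + (1−z)·ẇ/(ẇ+ŵ+f₀) ≤ z. -/
/-! With equal rewards `f₀ = f₁` this is a Pólya-urn step, so the normalized weight is a
martingale: `z (ẇ + f) + (1 - z) ẇ = ẇ + z f = z (ẇ + ŵ + f)`. A larger reward `f₀` on the
α*-edge only enlarges the denominator of the second term, which has a nonnegative numerator. -/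

theorem polya_urn_step_mean_eq {w s z f : ℝ} (hzs : z * s = w) (hsf : s + f ≠ 0) :
    z * (w + f) / (s + f) + (1 - z) * w / (s + f) = z := by
  rw [← add_div, div_eq_iff hsf]
  linear_combination -hzs

/-- One-step conditional-expectation inequality from the proof of Lemma 1:
`ẇ` (here `wd`) is the current weight of the β*-edge, `ŵ` (here `wh`) the weight of the
α*-edge, `f₁ ≤ f₀` the rewards for the longer resp. shorter path, and
`z = ẇ/(ẇ+ŵ)` the normalized weight of the β*-edge. -/
theorem one_step_supermartingale_ineq
    (wd wh f0 f1 : ℝ) (hwd : 0 < wd) (hwh : 0 < wh)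
    (hf1 : 0 < f1) (hf : f1 ≤ f0)
    (z : ℝ) (hz : z = wd / (wd + wh)) :
    z * (wd + f1) / (wd + wh + f1) + (1 - z) * wd / (wd + wh + f0) ≤ z := by
  have hs : 0 < wd + wh := by positivity
  have hzs : z * (wd + wh) = wd := by rw [hz, div_mul_cancel₀ _ hs.ne']
  have hz1 : 0 ≤ 1 - z := by
    rw [hz, sub_nonneg, div_le_one hs]
    linarith
  calc z * (wd + f1) / (wd + wh + f1) + (1 - z) * wd / (wd + wh + f0)
      ≤ z * (wd + f1) / (wd + wh + f1) + (1 - z) * wd / (wd + wh + f1) := by gcongr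
    _ = z := polya_urn_step_mean_eq hzs (by positivity)
end

section
/- Consider the two-color Pólya urn process (w₁[n], w₂[n])_{n≥0} with deterministic initial values w₁[0], w₂[0] > 0 and fixed rewards Δ₁ ≥ Δ₂ > 0, where at each step n+1, conditionally on the past, with probability w₁[n]/(w₁[n]+w₂[n]) one sets w₁[n+1] = w₁[n]+Δ₁ and w₂[n+1] = w₂[n], and otherwise sets w₂[n+1] = w₂[n]+Δ₂ and w₁[n+1] = w₁[n]. Then the process Z_n = w₂[n]/(w₁[n]+w₂[n]) is a supermartingale with respect to the natural filtration: E[Z_{n+1} | F_n] ≤ Z_n for all n. -/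
/-!
Given `ℱ n`, write `x = w₁[n]`, `y = w₂[n]`, `s = x + y`. Then `Z (n+1)` equals `y / (s + Δ₁)`
with conditional probability `x / s` and `(y + Δ₂) / (s + Δ₂)` otherwise, so
`E[Z (n+1) | ℱ n] - Z n = (y / s) * (x / (s + Δ₁) - x / (s + Δ₂)) ≤ 0` because `Δ₁ ≥ Δ₂`.
The weights never decrease, so they stay positive and `Z n` takes values in `[0, 1]`,
which gives integrability.
-/

open MeasureTheory

lemma polya_step_mean_le {x y d₁ d₂ : ℝ} (hx : 0 ≤ x) (hy : 0 ≤ y) (hxy : 0 < x + y)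
    (hd₂ : 0 ≤ d₂) (hd : d₂ ≤ d₁) :
    x / (x + y) * (y / (x + y + d₁)) + (1 - x / (x + y)) * ((y + d₂) / (x + y + d₂))
      ≤ y / (x + y) := by
  have hdiff : y / (x + y) - (x / (x + y) * (y / (x + y + d₁))
      + (1 - x / (x + y)) * ((y + d₂) / (x + y + d₂)))
      = y / (x + y) * (x / (x + y + d₂) - x / (x + y + d₁)) := by
    field_simp
    ring
  have : x / (x + y + d₁) ≤ x / (x + y + d₂) := by gcongr
  nlinarith [div_nonneg hy hxy.le]

lemma measurable_of_succ_eq_ite {Ω β : Type*} {m0 : MeasurableSpace Ω} [MeasurableSpace β]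
    {ℱ : Filtration ℕ m0} {w : ℕ → Ω → β} {ξ : ℕ → Ω → Bool} {f g : β → β}
    (hf : Measurable f) (hg : Measurable g) (h0 : Measurable[ℱ 0] (w 0))
    (hξ : ∀ n, Measurable[ℱ (n + 1)] (ξ n))
    (hrec : ∀ n ω, w (n + 1) ω = if ξ n ω then f (w n ω) else g (w n ω)) :
    ∀ n, Measurable[ℱ n] (w n)
  | 0 => h0
  | n + 1 => by
    have hw : Measurable[ℱ (n + 1)] (w n) :=
      (measurable_of_succ_eq_ite hf hg h0 hξ hrec n).mono (ℱ.mono n.le_succ) le_rfl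
    rw [funext (hrec n)]
    exact Measurable.ite (hξ n (measurableSet_singleton true)) (hf.comp hw) (hg.comp hw)

section

variable {Ω : Type*} {m m0 : MeasurableSpace Ω} {μ : Measure Ω} [IsFiniteMeasure μ]

lemma integrable_div_of_nonneg_of_le {u v : Ω → ℝ} (hu : Measurable u) (hv : Measurable v)
    (hu0 : ∀ ω, 0 ≤ u ω) (huv : ∀ ω, u ω ≤ v ω) : Integrable (fun ω => u ω / v ω) μ := by
  refine .of_bound (hu.div hv).aestronglyMeasurable 1 (.of_forall fun ω => ?_)
  rw [Real.norm_eq_abs, abs_of_nonneg (div_nonneg (hu0 ω) ((hu0 ω).trans (huv ω)))]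
  exact div_le_one_of_le₀ (huv ω) ((hu0 ω).trans (huv ω))

lemma condExp_ite_of_stronglyMeasurable (hm : m ≤ m0) {b : Ω → Bool} (hb : Measurable b)
    {f g : Ω → ℝ} (hf : StronglyMeasurable[m] f) (hg : StronglyMeasurable[m] g)
    (hfi : Integrable f μ) (hgi : Integrable g μ) :
    μ[fun ω => if b ω then f ω else g ω | m] =ᵐ[μ]
      fun ω => μ[fun ω => if b ω then (1 : ℝ) else 0 | m] ω * f ω
        + (1 - μ[fun ω => if b ω then (1 : ℝ) else 0 | m] ω) * g ω := by
  set χ : Ω → ℝ := fun ω => if b ω then 1 else 0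
  have hχ : Measurable χ := Measurable.ite (hb (measurableSet_singleton true))
    measurable_const measurable_const
  have hχ_le : ∀ ω, ‖χ ω‖ ≤ 1 := fun ω => by by_cases h : b ω <;> simp [χ, h]
  have hχi : Integrable χ μ := .of_bound hχ.aestronglyMeasurable 1 (.of_forall hχ_le)
  have hprod : Integrable ((f - g) * χ) μ :=
    (hfi.sub hgi).mul_bdd hχ.aestronglyMeasurable (.of_forall hχ_le)
  have hsplit : (fun ω => if b ω then f ω else g ω) = g + (f - g) * χ := by
    funext ω; by_cases h : b ω <;> simp [χ, h]
  rw [hsplit]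
  filter_upwards [condExp_add hgi hprod m,
    condExp_mul_of_stronglyMeasurable_left (hf.sub hg) hprod hχi] with ω hadd hmul
  rw [hadd, Pi.add_apply, hmul, condExp_of_stronglyMeasurable hm hg hgi]
  simp only [Pi.mul_apply, Pi.sub_apply]
  ring

lemma condExp_polya_step_le (hm : m ≤ m0) {x y : Ω → ℝ} (hx : Measurable[m] x)
    (hy : Measurable[m] y) (hx0 : ∀ ω, 0 ≤ x ω) (hy0 : ∀ ω, 0 < y ω) {b : Ω → Bool}
    (hb : Measurable b)
    (hp : μ[fun ω => if b ω then (1 : ℝ) else 0 | m] =ᵐ[μ] fun ω => x ω / (x ω + y ω))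
    {d₁ d₂ : ℝ} (hd₂ : 0 ≤ d₂) (hd : d₂ ≤ d₁) :
    μ[fun ω => if b ω then y ω / (x ω + y ω + d₁) else (y ω + d₂) / (x ω + y ω + d₂) | m]
      ≤ᵐ[μ] fun ω => y ω / (x ω + y ω) := by
  have hx' : Measurable x := hx.mono hm le_rfl
  have hy' : Measurable y := hy.mono hm le_rfl
  refine (condExp_ite_of_stronglyMeasurable hm hb (by fun_prop) (by fun_prop)
    (integrable_div_of_nonneg_of_le (by fun_prop) (by fun_prop) (fun ω => (hy0 ω).le)
      (fun ω => by linarith [hx0 ω]))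
    (integrable_div_of_nonneg_of_le (by fun_prop) (by fun_prop) (fun ω => by linarith [hy0 ω])
      (fun ω => by linarith [hx0 ω]))).trans_le ?_
  filter_upwards [hp] with ω hpω
  rw [hpω]
  exact polya_step_mean_le (hx0 ω) (hy0 ω).le (by linarith [hx0 ω, hy0 ω]) hd₂ hd

end

/-- Two-color Pólya urn with rewards `Δ₁ ≥ Δ₂ > 0`: the normalized weight
`Z_n = w₂[n]/(w₁[n]+w₂[n])` of the second color is a supermartingale. -/
theorem polya_urn_supermartingale
    {Ω : Type*} {m0 : MeasurableSpace Ω} {μ : Measure Ω} [IsProbabilityMeasure μ]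
    (ℱ : Filtration ℕ m0)
    (w₁ w₂ : ℕ → Ω → ℝ) (ξ : ℕ → Ω → Bool)
    (a₁ a₂ Δ₁ Δ₂ : ℝ)
    (ha₁ : 0 < a₁) (ha₂ : 0 < a₂) (hΔ₂ : 0 < Δ₂) (hΔ : Δ₂ ≤ Δ₁)
    (hw₁0 : ∀ ω, w₁ 0 ω = a₁) (hw₂0 : ∀ ω, w₂ 0 ω = a₂)
    (hξ : ∀ n, Measurable[ℱ (n + 1)] (ξ n))
    (hsel : ∀ n, μ[(fun ω => if ξ n ω then (1 : ℝ) else 0) | ℱ n]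
        =ᵐ[μ] fun ω => w₁ n ω / (w₁ n ω + w₂ n ω))
    (hrec₁ : ∀ n ω, w₁ (n + 1) ω = if ξ n ω then w₁ n ω + Δ₁ else w₁ n ω)
    (hrec₂ : ∀ n ω, w₂ (n + 1) ω = if ξ n ω then w₂ n ω else w₂ n ω + Δ₂) :
    Supermartingale (fun n ω => w₂ n ω / (w₁ n ω + w₂ n ω)) ℱ μ := by
  have hpos₁ : ∀ n ω, 0 < w₁ n ω := fun n ω => by
    have hmono : Monotone (w₁ · ω) := monotone_nat_of_le_succ fun k => by
      rw [hrec₁]; split_ifs <;> linarith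
    linarith [hmono n.zero_le, hw₁0 ω]
  have hpos₂ : ∀ n ω, 0 < w₂ n ω := fun n ω => by
    have hmono : Monotone (w₂ · ω) := monotone_nat_of_le_succ fun k => by
      rw [hrec₂]; split_ifs <;> linarith
    linarith [hmono n.zero_le, hw₂0 ω]
  have hm₁ : ∀ n, Measurable[ℱ n] (w₁ n) :=
    measurable_of_succ_eq_ite (measurable_add_const Δ₁) measurable_id
      (by rw [funext hw₁0]; exact measurable_const) hξ hrec₁
  have hm₂ : ∀ n, Measurable[ℱ n] (w₂ n) :=
    measurable_of_succ_eq_ite measurable_id (measurable_add_const Δ₂)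
      (by rw [funext hw₂0]; exact measurable_const) hξ hrec₂
  have hnext : ∀ n, (fun ω => w₂ (n + 1) ω / (w₁ (n + 1) ω + w₂ (n + 1) ω)) = fun ω =>
      if ξ n ω then w₂ n ω / (w₁ n ω + w₂ n ω + Δ₁)
      else (w₂ n ω + Δ₂) / (w₁ n ω + w₂ n ω + Δ₂) := fun n => by
    funext ω; rw [hrec₁, hrec₂]; split_ifs <;> ring_nf
  refine supermartingale_nat (fun n => ((hm₂ n).div ((hm₁ n).add (hm₂ n))).stronglyMeasurable)
    (fun n => integrable_div_of_nonneg_of_le ((hm₂ n).mono (ℱ.le n) le_rfl)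
      (((hm₁ n).add (hm₂ n)).mono (ℱ.le n) le_rfl) (fun ω => (hpos₂ n ω).le)
      (fun ω => by linarith [hpos₁ n ω])) fun n => ?_
  rw [hnext]
  exact condExp_polya_step_le (ℱ.le n) (hm₁ n) (hm₂ n) (fun ω => (hpos₁ n ω).le) (hpos₂ n)
    ((hξ n).mono (ℱ.le _) le_rfl) (hsel n) hΔ₂.le hΔ
end

section
/- Consider the two-color Pólya urn process (w₁[n], w₂[n])_{n≥0} with deterministic initial values w₁[0], w₂[0] > 0 and fixed rewards Δ₁ > Δ₂ > 0, where at each step n+1, conditionally on the past, with probability w₁[n]/(w₁[n]+w₂[n]) one sets w₁[n+1] = w₁[n]+Δ₁ and w₂[n+1] = w₂[n], and otherwise sets w₂[n+1] = w₂[n]+Δ₂ and w₁[n+1] = w₁[n]. Then Z_n = w₂[n]/(w₁[n]+w₂[n]) converges to 0 almost surely as n → ∞. -/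
/-!
Write `R n = w₂ n / w₁ n`, which dominates `Z n`. A one-step computation shows that once
`w₁ ≥ Δ₁ (Δ₁ + Δ₂) / (Δ₁ - Δ₂)`, `E[R (n + 1) | ℱ n] ≤ (1 - (Δ₁ - Δ₂) / (2 (w₁ + w₂))) R n`, and
since `w₁ + w₂ ≤ a₁ + a₂ + n Δ₁` these contraction rates have divergent sum. By Lévy's conditional
Borel–Cantelli lemma colour 1 is drawn infinitely often (its conditional probabilities are at least
`a₁ / (a₁ + a₂ + n Δ₁)`), so `w₁` eventually passes the threshold. On the event that it has passed
it by time `m`, `R` from time `m` on is a nonnegative supermartingale whose expectation tends to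
zero, so by the martingale convergence theorem and Fatou's lemma it tends to zero almost surely.
-/

open MeasureTheory Filter Topology Finset

theorem not_summable_div_add_mul {a b c : ℝ} (ha : 0 < a) (hb : 0 ≤ b) (hc : 0 < c) :
    ¬Summable fun n : ℕ => c / (a + n * b) := by
  intro hs
  refine (not_summable_iff_tendsto_nat_atTop_of_nonneg fun n => by positivity).2
    Real.tendsto_sum_range_one_div_nat_succ_atTop ?_
  refine (hs.mul_left ((a + b) / c)).of_nonneg_of_le (fun n => by positivity) fun n => ?_
  have hn : a + n * b ≤ (a + b) * (n + 1) := by nlinarith [(n.cast_nonneg : (0 : ℝ) ≤ n)]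
  calc 1 / ((n : ℝ) + 1) = (a + b) / ((a + b) * (n + 1)) := by field_simp
    _ ≤ (a + b) / (a + n * b) := by gcongr
    _ = (a + b) / c * (c / (a + n * b)) := by field_simp

theorem tendsto_zero_of_le_one_sub_mul {e u : ℕ → ℝ} (he : ∀ n, 0 ≤ e n)
    (hrec : ∀ n, e (n + 1) ≤ (1 - u n) * e n)
    (hu : Tendsto (fun n => ∑ k ∈ range n, u k) atTop atTop) : Tendsto e atTop (𝓝 0) := by
  have hexp : ∀ n, e n ≤ e 0 * Real.exp (-∑ k ∈ range n, u k) := by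
    intro n
    induction n with
    | zero => simp
    | succ n ih =>
      calc e (n + 1) ≤ (1 - u n) * e n := hrec n
        _ ≤ Real.exp (-u n) * e n :=
          mul_le_mul_of_nonneg_right (by linarith [Real.add_one_le_exp (-u n)]) (he n)
        _ ≤ Real.exp (-u n) * (e 0 * Real.exp (-∑ k ∈ range n, u k)) := by gcongr
        _ = e 0 * Real.exp (-∑ k ∈ range (n + 1), u k) := by
          rw [sum_range_succ, neg_add, Real.exp_add]; ring
  refine squeeze_zero he hexp ?_
  simpa using (Real.tendsto_exp_atBot.comp (tendsto_neg_atTop_atBot.comp hu)).const_mul (e 0)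

section

variable {Ω : Type*} {m0 : MeasurableSpace Ω} {μ : Measure Ω}

theorem MeasureTheory.Supermartingale.ae_tendsto_zero_of_integral_tendsto_zero
    [IsFiniteMeasure μ] {ℱ : Filtration ℕ m0} {f : ℕ → Ω → ℝ} (hf : Supermartingale f ℱ μ)
    (hf_nonneg : ∀ n ω, 0 ≤ f n ω) (hlim : Tendsto (fun n => ∫ ω, f n ω ∂μ) atTop (𝓝 0)) :
    ∀ᵐ ω ∂μ, Tendsto (fun n => f n ω) atTop (𝓝 0) := by
  have hlint : ∀ n, ∫⁻ ω, ENNReal.ofReal (f n ω) ∂μ = ENNReal.ofReal (∫ ω, f n ω ∂μ) := fun n =>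
    (ofReal_integral_eq_lintegral_ofReal (hf.integrable n) (ae_of_all _ (hf_nonneg n))).symm
  obtain ⟨C, hC⟩ := hlim.bddAbove_range
  have hconv : ∀ᵐ ω ∂μ, ∃ c, Tendsto (fun n => -f n ω) atTop (𝓝 c) := by
    refine hf.neg.exists_ae_tendsto_of_bdd (R := C.toNNReal) fun n => ?_
    change eLpNorm (-f n) 1 μ ≤ ENNReal.ofReal C
    rw [eLpNorm_neg, eLpNorm_one_eq_lintegral_enorm]
    simp_rw [Real.enorm_eq_ofReal (hf_nonneg n _), hlint]
    exact ENNReal.ofReal_le_ofReal (hC ⟨n, rfl⟩)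
  have hmeas : ∀ n, Measurable fun ω => ENNReal.ofReal (f n ω) := fun n =>
    ((hf.stronglyMeasurable n).mono (ℱ.le n)).measurable.ennreal_ofReal
  have hliminf : ∀ᵐ ω ∂μ, liminf (fun n => ENNReal.ofReal (f n ω)) atTop = 0 := by
    refine (lintegral_eq_zero_iff (.liminf hmeas)).1 (le_antisymm ?_ bot_le)
    refine (lintegral_liminf_le hmeas).trans_eq ?_
    simp_rw [hlint]
    simpa using (ENNReal.tendsto_ofReal hlim).liminf_eq
  filter_upwards [hconv, hliminf] with ω ⟨c, hc⟩ hω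
  have hc' : Tendsto (fun n => f n ω) atTop (𝓝 (-c)) := by simpa using hc.neg
  rw [(ENNReal.tendsto_ofReal hc').liminf_eq, ENNReal.ofReal_eq_zero] at hω
  have := ge_of_tendsto' hc' (fun n => hf_nonneg n ω)
  rwa [show -c = 0 by linarith] at hc'

theorem MeasureTheory.ae_tendsto_zero_of_condExp_le_one_sub_mul [IsFiniteMeasure μ]
    {ℱ : Filtration ℕ m0} {X : ℕ → Ω → ℝ} {u : ℕ → ℝ} (hX : StronglyAdapted ℱ X)
    (hX_int : ∀ n, Integrable (X n) μ) (hX_nonneg : ∀ n ω, 0 ≤ X n ω) (hu : ∀ n, 0 ≤ u n)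
    (hu_sum : ¬Summable u) (hdrift : ∀ n, μ[X (n + 1)|ℱ n] ≤ᵐ[μ] fun ω => (1 - u n) * X n ω) :
    ∀ᵐ ω ∂μ, Tendsto (fun n => X n ω) atTop (𝓝 0) := by
  have hsuper : Supermartingale X ℱ μ := supermartingale_nat hX hX_int fun n =>
    (hdrift n).trans (ae_of_all _ fun ω => by nlinarith [hu n, hX_nonneg n ω])
  refine hsuper.ae_tendsto_zero_of_integral_tendsto_zero hX_nonneg <|
    tendsto_zero_of_le_one_sub_mul (fun n => integral_nonneg (hX_nonneg n)) (fun n => ?_)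
      ((not_summable_iff_tendsto_nat_atTop_of_nonneg hu).1 hu_sum)
  calc ∫ ω, X (n + 1) ω ∂μ = ∫ ω, μ[X (n + 1)|ℱ n] ω ∂μ := (integral_condExp (ℱ.le n)).symm
    _ ≤ ∫ ω, (1 - u n) * X n ω ∂μ :=
      integral_mono_ae integrable_condExp ((hX_int n).const_mul _) (hdrift n)
    _ = (1 - u n) * ∫ ω, X n ω ∂μ := integral_const_mul _ _

def MeasureTheory.Filtration.shift (ℱ : Filtration ℕ m0) (m : ℕ) : Filtration ℕ m0 :=
  ⟨fun n => ℱ (n + m), fun _ _ h => ℱ.mono (by omega), fun _ => ℱ.le _⟩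

@[simp]
theorem MeasureTheory.Filtration.shift_apply (ℱ : Filtration ℕ m0) (m n : ℕ) :
    ℱ.shift m n = ℱ (n + m) :=
  rfl

theorem MeasureTheory.ae_tendsto_zero_on_of_condExp_le_one_sub_mul [IsFiniteMeasure μ]
    {ℱ : Filtration ℕ m0} {X : ℕ → Ω → ℝ} {u : ℕ → ℝ} {A : Set Ω} {m : ℕ}
    (hX : StronglyAdapted ℱ X) (hX_int : ∀ n, Integrable (X n) μ)
    (hX_nonneg : ∀ n ω, 0 ≤ X n ω) (hu : ∀ n, 0 ≤ u n) (hu_sum : ¬Summable u)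
    (hA : MeasurableSet[ℱ m] A)
    (hdrift : ∀ n, m ≤ n → ∀ᵐ ω ∂μ, ω ∈ A → μ[X (n + 1)|ℱ n] ω ≤ (1 - u n) * X n ω) :
    ∀ᵐ ω ∂μ, ω ∈ A → Tendsto (fun n => X n ω) atTop (𝓝 0) := by
  have hA' : ∀ n, MeasurableSet[ℱ (n + m)] A := fun n => ℱ.mono (by omega) A hA
  have hlim := ae_tendsto_zero_of_condExp_le_one_sub_mul (ℱ := ℱ.shift m)
    (X := fun n => A.indicator (X (n + m))) (u := fun n => u (n + m))
    (fun n => (hX (n + m)).indicator (hA' n)) (fun n => (hX_int _).indicator (ℱ.le _ _ (hA' n)))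
    (fun n => Set.indicator_nonneg fun ω _ => hX_nonneg _ ω) (fun n => hu _)
    ((summable_nat_add_iff m).not.2 hu_sum) fun n => by
      have hind := condExp_indicator (hX_int (n + m + 1)) (hA' n)
      rw [show n + 1 + m = n + m + 1 by omega]
      filter_upwards [hind, hdrift (n + m) (by omega)] with ω hind hω
      by_cases hωA : ω ∈ A <;> simp_all
  filter_upwards [hlim] with ω hω hωA
  rw [← tendsto_add_atTop_iff_nat m]
  simpa [hωA] using hω

theorem MeasureTheory.condExp_ite_ae_eq [IsFiniteMeasure μ] {m : MeasurableSpace Ω} (hm : m ≤ m0)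
    {b : Ω → Bool} (hb : Measurable[m0] b) {f g p : Ω → ℝ} (hf : StronglyMeasurable[m] f)
    (hg : StronglyMeasurable[m] g) (hfi : Integrable f μ) (hgi : Integrable g μ)
    (hp : μ[fun ω => if b ω then (1 : ℝ) else 0|m] =ᵐ[μ] p) :
    μ[fun ω => if b ω then f ω else g ω|m] =ᵐ[μ] fun ω => p ω * f ω + (1 - p ω) * g ω := by
  set φ : Ω → ℝ := fun ω => if b ω then 1 else 0
  have hφ : Measurable[m0] φ :=
    Measurable.ite (hb (measurableSet_singleton true)) measurable_const measurable_const
  have hφ_le : ∀ᵐ ω ∂μ, ‖φ ω‖ ≤ 1 := ae_of_all _ fun ω => by by_cases hω : b ω <;> simp [φ, hω]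
  have hφi : Integrable φ μ := .of_bound hφ.aestronglyMeasurable 1 hφ_le
  have hprod : Integrable ((f - g) * φ) μ := (hfi.sub hgi).mul_bdd hφ.aestronglyMeasurable hφ_le
  have hsplit : (fun ω => if b ω then f ω else g ω) = g + (f - g) * φ := by
    funext ω; by_cases hω : b ω <;> simp [φ, hω]
  rw [hsplit]
  calc μ[g + (f - g) * φ|m] =ᵐ[μ] μ[g|m] + μ[(f - g) * φ|m] := condExp_add hgi hprod m
    _ =ᵐ[μ] g + (f - g) * p := by
      rw [condExp_of_stronglyMeasurable hm hg hgi]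
      exact (condExp_mul_of_stronglyMeasurable_left (hf.sub hg) hprod hφi).trans
        hp.mul_left |>.add_left
    _ = fun ω => p ω * f ω + (1 - p ω) * g ω := by
      funext ω
      simp only [Pi.add_apply, Pi.mul_apply, Pi.sub_apply]
      ring

structure PolyaUrn (μ : Measure Ω) (ℱ : Filtration ℕ m0) (w₁ w₂ : ℕ → Ω → ℝ)
    (ξ : ℕ → Ω → Bool) (a₁ a₂ Δ₁ Δ₂ : ℝ) : Prop where
  w₁_zero : ∀ ω, w₁ 0 ω = a₁
  w₂_zero : ∀ ω, w₂ 0 ω = a₂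
  measurable_ξ : ∀ n, Measurable[ℱ (n + 1)] (ξ n)
  condExp_ξ : ∀ n, μ[(fun ω => if ξ n ω then (1 : ℝ) else 0)|ℱ n]
    =ᵐ[μ] fun ω => w₁ n ω / (w₁ n ω + w₂ n ω)
  w₁_succ : ∀ n ω, w₁ (n + 1) ω = if ξ n ω then w₁ n ω + Δ₁ else w₁ n ω
  w₂_succ : ∀ n ω, w₂ (n + 1) ω = if ξ n ω then w₂ n ω else w₂ n ω + Δ₂

namespace PolyaUrn

variable {ℱ : Filtration ℕ m0} {w₁ w₂ : ℕ → Ω → ℝ} {ξ : ℕ → Ω → Bool} {a₁ a₂ Δ₁ Δ₂ : ℝ}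

theorem ratio_step_le {x y : ℝ} (hΔ₂ : 0 ≤ Δ₂) (hΔ : Δ₂ < Δ₁) (hx : 0 < x) (hy : 0 ≤ y)
    (hW : Δ₁ * (Δ₁ + Δ₂) / (Δ₁ - Δ₂) ≤ x) :
    x / (x + y) * (y / (x + Δ₁)) + (1 - x / (x + y)) * ((y + Δ₂) / x)
      ≤ (1 - (Δ₁ - Δ₂) / 2 / (x + y)) * (y / x) := by
  have hd : 0 < Δ₁ - Δ₂ := by linarith
  have hWx : 0 ≤ x * (Δ₁ - Δ₂) - Δ₁ * (Δ₁ + Δ₂) := by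
    rw [div_le_iff₀ hd] at hW; linarith
  have hxy : 0 < x + y := by linarith
  have hxΔ : 0 < x + Δ₁ := by linarith
  rw [← sub_nonneg]
  have expand : (1 - (Δ₁ - Δ₂) / 2 / (x + y)) * (y / x)
      - (x / (x + y) * (y / (x + Δ₁)) + (1 - x / (x + y)) * ((y + Δ₂) / x))
      = y * (x * (Δ₁ - Δ₂) - Δ₁ * (Δ₁ + Δ₂)) / (2 * (x * (x + y) * (x + Δ₁))) := by
    field_simp
    ring
  rw [expand]
  positivity

theorem monotone_w₁ (h : PolyaUrn μ ℱ w₁ w₂ ξ a₁ a₂ Δ₁ Δ₂) (hΔ₁ : 0 ≤ Δ₁) (ω : Ω) :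
    Monotone (w₁ · ω) :=
  monotone_nat_of_le_succ fun n => by rw [h.w₁_succ]; split <;> linarith

theorem monotone_w₂ (h : PolyaUrn μ ℱ w₁ w₂ ξ a₁ a₂ Δ₁ Δ₂) (hΔ₂ : 0 ≤ Δ₂) (ω : Ω) :
    Monotone (w₂ · ω) :=
  monotone_nat_of_le_succ fun n => by rw [h.w₂_succ]; split <;> linarith

theorem a₁_le_w₁ (h : PolyaUrn μ ℱ w₁ w₂ ξ a₁ a₂ Δ₁ Δ₂) (hΔ₁ : 0 ≤ Δ₁) (n : ℕ) (ω : Ω) :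
    a₁ ≤ w₁ n ω :=
  h.w₁_zero ω ▸ h.monotone_w₁ hΔ₁ ω n.zero_le

theorem a₂_le_w₂ (h : PolyaUrn μ ℱ w₁ w₂ ξ a₁ a₂ Δ₁ Δ₂) (hΔ₂ : 0 ≤ Δ₂) (n : ℕ) (ω : Ω) :
    a₂ ≤ w₂ n ω :=
  h.w₂_zero ω ▸ h.monotone_w₂ hΔ₂ ω n.zero_le

theorem w₂_le (h : PolyaUrn μ ℱ w₁ w₂ ξ a₁ a₂ Δ₁ Δ₂) (hΔ₂ : 0 ≤ Δ₂) (n : ℕ) (ω : Ω) :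
    w₂ n ω ≤ a₂ + n * Δ₂ := by
  induction n with
  | zero => simp [h.w₂_zero]
  | succ n ih => rw [h.w₂_succ]; push_cast; split <;> linarith

theorem w₁_add_w₂_le (h : PolyaUrn μ ℱ w₁ w₂ ξ a₁ a₂ Δ₁ Δ₂) (hΔ : Δ₂ ≤ Δ₁) (n : ℕ) (ω : Ω) :
    w₁ n ω + w₂ n ω ≤ a₁ + a₂ + n * Δ₁ := by
  induction n with
  | zero => simp [h.w₁_zero, h.w₂_zero]
  | succ n ih => rw [h.w₁_succ, h.w₂_succ]; push_cast; split <;> linarith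

theorem measurable_w₁ (h : PolyaUrn μ ℱ w₁ w₂ ξ a₁ a₂ Δ₁ Δ₂) (n : ℕ) : Measurable[ℱ n] (w₁ n) := by
  induction n with
  | zero => rw [funext h.w₁_zero]; exact measurable_const
  | succ n ih =>
    have ih' := ih.mono (ℱ.mono n.le_succ) le_rfl
    rw [funext (h.w₁_succ n)]
    exact .ite (h.measurable_ξ n (measurableSet_singleton true)) (ih'.add_const _) ih'

theorem measurable_w₂ (h : PolyaUrn μ ℱ w₁ w₂ ξ a₁ a₂ Δ₁ Δ₂) (n : ℕ) : Measurable[ℱ n] (w₂ n) := by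
  induction n with
  | zero => rw [funext h.w₂_zero]; exact measurable_const
  | succ n ih =>
    have ih' := ih.mono (ℱ.mono n.le_succ) le_rfl
    rw [funext (h.w₂_succ n)]
    exact .ite (h.measurable_ξ n (measurableSet_singleton true)) ih' (ih'.add_const _)

theorem integrable_add_div_add [IsFiniteMeasure μ] (h : PolyaUrn μ ℱ w₁ w₂ ξ a₁ a₂ Δ₁ Δ₂)
    (ha₁ : 0 < a₁) (ha₂ : 0 ≤ a₂) (hΔ₁ : 0 ≤ Δ₁) (hΔ₂ : 0 ≤ Δ₂) {c d : ℝ} (hc : 0 ≤ c)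
    (hd : 0 ≤ d) (n : ℕ) : Integrable (fun ω => (w₂ n ω + c) / (w₁ n ω + d)) μ := by
  have hmeas : Measurable[ℱ n] fun ω => (w₂ n ω + c) / (w₁ n ω + d) :=
    ((h.measurable_w₂ n).add_const c).div ((h.measurable_w₁ n).add_const d)
  refine .of_bound ((hmeas.mono (ℱ.le n) le_rfl).aestronglyMeasurable) ((a₂ + n * Δ₂ + c) / a₁)
    (ae_of_all _ fun ω => ?_)
  have h₁ := h.a₁_le_w₁ hΔ₁ n ω
  have h₂ := h.a₂_le_w₂ hΔ₂ n ω
  rw [Real.norm_of_nonneg (div_nonneg (by linarith) (by linarith))]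
  exact div_le_div₀ (by positivity) (by linarith [h.w₂_le hΔ₂ n ω]) ha₁ (by linarith)

theorem condExp_ratio_succ [IsFiniteMeasure μ] (h : PolyaUrn μ ℱ w₁ w₂ ξ a₁ a₂ Δ₁ Δ₂)
    (ha₁ : 0 < a₁) (ha₂ : 0 ≤ a₂) (hΔ₁ : 0 ≤ Δ₁) (hΔ₂ : 0 ≤ Δ₂) (n : ℕ) :
    μ[fun ω => w₂ (n + 1) ω / w₁ (n + 1) ω|ℱ n] =ᵐ[μ] fun ω =>
      w₁ n ω / (w₁ n ω + w₂ n ω) * (w₂ n ω / (w₁ n ω + Δ₁))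
        + (1 - w₁ n ω / (w₁ n ω + w₂ n ω)) * ((w₂ n ω + Δ₂) / w₁ n ω) := by
  have hsucc : (fun ω => w₂ (n + 1) ω / w₁ (n + 1) ω) =
      fun ω => if ξ n ω then w₂ n ω / (w₁ n ω + Δ₁) else (w₂ n ω + Δ₂) / w₁ n ω := by
    funext ω; rw [h.w₁_succ, h.w₂_succ]; split <;> rfl
  have hf := h.integrable_add_div_add ha₁ ha₂ hΔ₁ hΔ₂ le_rfl hΔ₁ n
  have hg := h.integrable_add_div_add ha₁ ha₂ hΔ₁ hΔ₂ hΔ₂ le_rfl n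
  simp only [add_zero] at hf hg
  rw [hsucc]
  exact condExp_ite_ae_eq (ℱ.le n) ((h.measurable_ξ n).mono (ℱ.le _) le_rfl)
    ((h.measurable_w₂ n).div ((h.measurable_w₁ n).add_const _)).stronglyMeasurable
    (((h.measurable_w₂ n).add_const _).div (h.measurable_w₁ n)).stronglyMeasurable hf hg
    (h.condExp_ξ n)

theorem condExp_ratio_succ_le [IsFiniteMeasure μ] (h : PolyaUrn μ ℱ w₁ w₂ ξ a₁ a₂ Δ₁ Δ₂)
    (ha₁ : 0 < a₁) (ha₂ : 0 ≤ a₂) (hΔ₂ : 0 ≤ Δ₂) (hΔ : Δ₂ < Δ₁) (n : ℕ) :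
    ∀ᵐ ω ∂μ, Δ₁ * (Δ₁ + Δ₂) / (Δ₁ - Δ₂) ≤ w₁ n ω →
      μ[fun ω => w₂ (n + 1) ω / w₁ (n + 1) ω|ℱ n] ω
        ≤ (1 - (Δ₁ - Δ₂) / 2 / (a₁ + a₂ + n * Δ₁)) * (w₂ n ω / w₁ n ω) := by
  have hΔ₁ : 0 ≤ Δ₁ := hΔ₂.trans hΔ.le
  filter_upwards [h.condExp_ratio_succ ha₁ ha₂ hΔ₁ hΔ₂ n] with ω hω hW
  have h₁ := h.a₁_le_w₁ hΔ₁ n ω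
  have h₂ := h.a₂_le_w₂ hΔ₂ n ω
  rw [hω]
  refine (ratio_step_le hΔ₂ hΔ (by linarith) (by linarith) hW).trans ?_
  have hε : 0 ≤ (Δ₁ - Δ₂) / 2 := by linarith
  have hrate : (Δ₁ - Δ₂) / 2 / (a₁ + a₂ + n * Δ₁) ≤ (Δ₁ - Δ₂) / 2 / (w₁ n ω + w₂ n ω) :=
    div_le_div_of_nonneg_left hε (by linarith) (h.w₁_add_w₂_le hΔ.le n ω)
  exact mul_le_mul_of_nonneg_right (by linarith) (div_nonneg (by linarith) (by linarith))

theorem frequently_ξ [IsFiniteMeasure μ] (h : PolyaUrn μ ℱ w₁ w₂ ξ a₁ a₂ Δ₁ Δ₂) (ha₁ : 0 < a₁)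
    (ha₂ : 0 ≤ a₂) (hΔ₂ : 0 ≤ Δ₂) (hΔ : Δ₂ ≤ Δ₁) : ∀ᵐ ω ∂μ, ∃ᶠ n in atTop, ξ n ω := by
  have hΔ₁ : 0 ≤ Δ₁ := hΔ₂.trans hΔ
  have hs : ∀ n, MeasurableSet[ℱ.shift 1 n] {ω | ξ n ω} :=
    fun n => h.measurable_ξ n (measurableSet_singleton true)
  have hind : ∀ k, ({ω | ξ k ω} : Set Ω).indicator (1 : Ω → ℝ) = fun ω => if ξ k ω then 1 else 0 :=
    fun k => by ext ω; simp [Set.indicator_apply]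
  have hdiv : Tendsto (fun n => ∑ k ∈ range n, a₁ / (a₁ + a₂ + Δ₁ + k * Δ₁)) atTop atTop :=
    (not_summable_iff_tendsto_nat_atTop_of_nonneg fun k => by positivity).1
      (not_summable_div_add_mul (by positivity) hΔ₁ ha₁)
  filter_upwards [ae_mem_limsup_atTop_iff μ hs, ae_all_iff.2 fun k => h.condExp_ξ (k + 1)]
    with ω hω hp
  refine (mem_limsup_iff_frequently_mem (s := fun n => {ω | ξ n ω})).1 <| hω.2 <|
    tendsto_atTop_mono (fun n => sum_le_sum fun k _ => ?_) hdiv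
  rw [hind, Filtration.shift_apply, hp k]
  have h₁ := h.a₁_le_w₁ hΔ₁ (k + 1) ω
  have h₂ := h.a₂_le_w₂ hΔ₂ (k + 1) ω
  have hS := h.w₁_add_w₂_le hΔ (k + 1) ω
  push_cast at hS
  calc a₁ / (a₁ + a₂ + Δ₁ + k * Δ₁) ≤ a₁ / (w₁ (k + 1) ω + w₂ (k + 1) ω) :=
        div_le_div_of_nonneg_left ha₁.le (by linarith) (by linarith)
    _ ≤ w₁ (k + 1) ω / (w₁ (k + 1) ω + w₂ (k + 1) ω) := by gcongr; linarith

theorem tendsto_w₁_atTop_of_frequently (h : PolyaUrn μ ℱ w₁ w₂ ξ a₁ a₂ Δ₁ Δ₂) (hΔ₁ : 0 < Δ₁)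
    {ω : Ω} (hfreq : ∃ᶠ n in atTop, ξ n ω) : Tendsto (w₁ · ω) atTop atTop := by
  have hmono := h.monotone_w₁ hΔ₁.le ω
  have hgrow : ∀ j : ℕ, ∃ n, a₁ + j * Δ₁ ≤ w₁ n ω := by
    intro j
    induction j with
    | zero => exact ⟨0, by simp [h.w₁_zero]⟩
    | succ j ih =>
      obtain ⟨n, hn⟩ := ih
      obtain ⟨k, hk, hξk⟩ := frequently_atTop.1 hfreq n
      refine ⟨k + 1, ?_⟩
      rw [h.w₁_succ, if_pos hξk]
      push_cast
      linarith [hmono hk]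
  refine tendsto_atTop_atTop_of_monotone hmono fun b => ?_
  obtain ⟨j, hj⟩ := exists_nat_ge ((b - a₁) / Δ₁)
  obtain ⟨n, hn⟩ := hgrow j
  exact ⟨n, by rw [div_le_iff₀ hΔ₁] at hj; linarith⟩

theorem ae_tendsto_ratio_zero [IsFiniteMeasure μ] (h : PolyaUrn μ ℱ w₁ w₂ ξ a₁ a₂ Δ₁ Δ₂)
    (ha₁ : 0 < a₁) (ha₂ : 0 ≤ a₂) (hΔ₂ : 0 ≤ Δ₂) (hΔ : Δ₂ < Δ₁) :
    ∀ᵐ ω ∂μ, Tendsto (fun n => w₂ n ω / w₁ n ω) atTop (𝓝 0) := by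
  have hΔ₁ : 0 < Δ₁ := hΔ₂.trans_lt hΔ
  set W := Δ₁ * (Δ₁ + Δ₂) / (Δ₁ - Δ₂)
  have hloc : ∀ m, ∀ᵐ ω ∂μ, ω ∈ {ω | W ≤ w₁ m ω} →
      Tendsto (fun n => w₂ n ω / w₁ n ω) atTop (𝓝 0) := fun m =>
    ae_tendsto_zero_on_of_condExp_le_one_sub_mul (u := fun n => (Δ₁ - Δ₂) / 2 / (a₁ + a₂ + n * Δ₁))
      (fun n => ((h.measurable_w₂ n).div (h.measurable_w₁ n)).stronglyMeasurable)
      (fun n => by simpa using h.integrable_add_div_add ha₁ ha₂ hΔ₁.le hΔ₂ le_rfl le_rfl n)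
      (fun n ω => div_nonneg (ha₂.trans (h.a₂_le_w₂ hΔ₂ n ω))
        (ha₁.le.trans (h.a₁_le_w₁ hΔ₁.le n ω)))
      (fun n => div_nonneg (by linarith) (by positivity))
      (not_summable_div_add_mul (by positivity) hΔ₁.le (by linarith))
      (measurableSet_le measurable_const (h.measurable_w₁ m))
      fun n hmn => by
        filter_upwards [h.condExp_ratio_succ_le ha₁ ha₂ hΔ₂ hΔ n] with ω hω hωm
        exact hω (hωm.trans (h.monotone_w₁ hΔ₁.le ω hmn))
  filter_upwards [h.frequently_ξ ha₁ ha₂ hΔ₂ hΔ.le, ae_all_iff.2 hloc] with ω hfreq hloc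
  obtain ⟨m, hm⟩ := ((h.tendsto_w₁_atTop_of_frequently hΔ₁ hfreq).eventually_ge_atTop W).exists
  exact hloc m hm

end PolyaUrn

end

/-- Two-color Pólya urn with rewards `Δ₁ > Δ₂ > 0`: the normalized weight
`Z_n = w₂[n]/(w₁[n]+w₂[n])` of the color with the smaller reward converges to `0`
almost surely. -/
theorem polya_urn_beta_edge_vanishes
    {Ω : Type*} {m0 : MeasurableSpace Ω} {μ : Measure Ω} [IsProbabilityMeasure μ]
    (ℱ : Filtration ℕ m0)
    (w₁ w₂ : ℕ → Ω → ℝ) (ξ : ℕ → Ω → Bool)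
    (a₁ a₂ Δ₁ Δ₂ : ℝ)
    (ha₁ : 0 < a₁) (ha₂ : 0 < a₂) (hΔ₂ : 0 < Δ₂) (hΔ : Δ₂ < Δ₁)
    (hw₁0 : ∀ ω, w₁ 0 ω = a₁) (hw₂0 : ∀ ω, w₂ 0 ω = a₂)
    (hξ : ∀ n, Measurable[ℱ (n + 1)] (ξ n))
    (hsel : ∀ n, μ[(fun ω => if ξ n ω then (1 : ℝ) else 0) | ℱ n]
        =ᵐ[μ] fun ω => w₁ n ω / (w₁ n ω + w₂ n ω))
    (hrec₁ : ∀ n ω, w₁ (n + 1) ω = if ξ n ω then w₁ n ω + Δ₁ else w₁ n ω)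
    (hrec₂ : ∀ n ω, w₂ (n + 1) ω = if ξ n ω then w₂ n ω else w₂ n ω + Δ₂) :
    ∀ᵐ ω ∂μ, Tendsto (fun n => w₂ n ω / (w₁ n ω + w₂ n ω)) atTop (nhds 0) := by
  have h : PolyaUrn μ ℱ w₁ w₂ ξ a₁ a₂ Δ₁ Δ₂ := ⟨hw₁0, hw₂0, hξ, hsel, hrec₁, hrec₂⟩
  have hΔ₁ : 0 ≤ Δ₁ := hΔ₂.le.trans hΔ.le
  filter_upwards [h.ae_tendsto_ratio_zero ha₁ ha₂.le hΔ₂.le hΔ] with ω hω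
  have h₁ n : 0 < w₁ n ω := ha₁.trans_le (h.a₁_le_w₁ hΔ₁ n ω)
  have h₂ n : 0 ≤ w₂ n ω := ha₂.le.trans (h.a₂_le_w₂ hΔ₂.le n ω)
  refine squeeze_zero (fun n => div_nonneg (h₂ n) (by linarith [h₁ n, h₂ n])) (fun n => ?_) hω
  exact div_le_div_of_nonneg_left (h₂ n) (h₁ n) (by linarith [h₂ n])
end

section
/- For all real α > 0 and σ > 0, (1/α) · Σ_{i=0}^{∞} (α/(α+1))^i · (α + iσ)/(α + 1 + (i+1)σ) ≤ 1. -/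
/-- Normalized form of the key algebraic inequality in the proof of Lemma 2
(constant reward, `q = 0`): `α = ẇ/ŵ`, `σ = C/ŵ`. -/
theorem lemma2_series_inequality (α σ : ℝ) (hα : 0 < α) (hσ : 0 < σ) :
    (1 / α) * ∑' i : ℕ, (α / (α + 1)) ^ i *
      ((α + (i : ℝ) * σ) / (α + 1 + ((i : ℝ) + 1) * σ)) ≤ 1 := by
  have hα1 : (0:ℝ) < α + 1 := by linarith
  set r : ℝ := α / (α + 1) with hr
  have hr0 : 0 ≤ r := by positivity
  have hr1 : r < 1 := by rw [hr, div_lt_one hα1]; linarith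
  have hrα : r * (α + 1) = α := by rw [hr]; field_simp
  set f : ℕ → ℝ := fun i => r ^ i * ((α + (i : ℝ) * σ) / (α + 1 + ((i : ℝ) + 1) * σ)) with hf
  set c : ℕ → ℝ := fun i => (α + 1) * r ^ i * ((α + (i : ℝ) * σ) / (α + 1 + (i : ℝ) * σ)) with hc
  have hD : ∀ x : ℝ, 0 ≤ x → (0:ℝ) < α + 1 + x * σ := fun x hx => by nlinarith
  have hfnn : ∀ i, 0 ≤ f i := by
    intro i
    apply mul_nonneg (pow_nonneg hr0 i)
    apply div_nonneg
    · positivity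
    · exact le_of_lt (hD _ (by positivity))
  have hfle : ∀ i, f i ≤ r ^ i := by
    intro i
    have h2 : (0:ℝ) < α + 1 + ((i:ℝ) + 1) * σ := hD _ (by positivity)
    calc f i ≤ r ^ i * 1 := by
          apply mul_le_mul_of_nonneg_left _ (pow_nonneg hr0 i)
          rw [div_le_one h2]
          nlinarith [Nat.cast_nonneg (α := ℝ) i]
      _ = r ^ i := mul_one _
  have hsum : Summable f :=
    Summable.of_nonneg_of_le hfnn hfle (summable_geometric_of_lt_one hr0 hr1)
  have hkey : ∀ i, f i ≤ c i - c (i+1) := by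
    intro i
    have hD1 : (0:ℝ) < α + 1 + (i:ℝ) * σ := hD _ (by positivity)
    have hD2 : (0:ℝ) < α + 1 + ((i:ℝ) + 1) * σ := hD _ (by positivity)
    have hfrac : (α + (i:ℝ) * σ) / (α + 1 + ((i:ℝ) + 1) * σ) ≤
        (α + 1) * ((α + (i:ℝ) * σ) / (α + 1 + (i:ℝ) * σ))
        - α * ((α + ((i:ℝ) + 1) * σ) / (α + 1 + ((i:ℝ) + 1) * σ)) := by
      have hid : (α + 1) * ((α + (i:ℝ) * σ) / (α + 1 + (i:ℝ) * σ))
          - α * ((α + ((i:ℝ) + 1) * σ) / (α + 1 + ((i:ℝ) + 1) * σ))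
          - (α + (i:ℝ) * σ) / (α + 1 + ((i:ℝ) + 1) * σ)
          = (i:ℝ) * σ ^ 2 / ((α + 1 + (i:ℝ) * σ) * (α + 1 + ((i:ℝ) + 1) * σ)) := by
        field_simp
        ring
      have hpos : 0 ≤ (i:ℝ) * σ ^ 2 / ((α + 1 + (i:ℝ) * σ) * (α + 1 + ((i:ℝ) + 1) * σ)) := by
        apply div_nonneg (by positivity) (le_of_lt (mul_pos hD1 hD2))
      linarith [hid ▸ hpos]
    have hcdiff : c i - c (i+1) = r ^ i *
        ((α + 1) * ((α + (i:ℝ) * σ) / (α + 1 + (i:ℝ) * σ))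
        - α * ((α + ((i:ℝ) + 1) * σ) / (α + 1 + ((i:ℝ) + 1) * σ))) := by
      simp only [hc]
      push_cast
      linear_combination
        (-(r ^ i * ((α + ((i:ℝ) + 1) * σ) / (α + 1 + ((i:ℝ) + 1) * σ)))) * hrα
    rw [hcdiff, hf]
    exact mul_le_mul_of_nonneg_left hfrac (pow_nonneg hr0 i)
  have hc0 : c 0 = α := by
    simp only [hc]
    norm_num
    field_simp
  have hpart : ∀ n, ∑ i ∈ Finset.range n, f i ≤ α := by
    intro n
    have h1 : ∑ i ∈ Finset.range n, (c i - c (i+1)) = c 0 - c n :=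
      Finset.sum_range_sub' c n
    have h2 : ∑ i ∈ Finset.range n, f i ≤ ∑ i ∈ Finset.range n, (c i - c (i+1)) :=
      Finset.sum_le_sum fun i _ => hkey i
    have hcn : 0 ≤ c n := by
      apply mul_nonneg (by positivity)
      apply div_nonneg
      · positivity
      · exact le_of_lt (hD _ (by positivity))
    rw [h1, hc0] at h2
    linarith
  have htsum : (∑' i, f i) ≤ α := by
    apply Summable.tsum_le_of_sum_le hsum
    intro u
    obtain ⟨n, hn⟩ := u.exists_nat_subset_range
    calc ∑ x ∈ u, f x ≤ ∑ i ∈ Finset.range n, f i :=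
          Finset.sum_le_sum_of_subset_of_nonneg hn fun i _ _ => hfnn i
      _ ≤ α := hpart n
  calc (1 / α) * ∑' i, f i ≤ (1 / α) * α :=
        mul_le_mul_of_nonneg_left htsum (by positivity)
    _ = 1 := by field_simp
end

section
/- For α > 0 and x > 0 define g(α,x) = ((x+α+1)/α) · Σ_{j=1}^{∞} (α/(α+1))^j · 1/(x+j). Then g(α,x) > 1 for every α > 0 and x > 0. -/
/-!
Put weights `w j = (α/(α+1))^(j+1)` on the points `t j = x + j + 1`. The weights sum to `α`
and the weighted mean of the points is exactly `x + α + 1`, so `g(α,x) > 1` is the strict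
Jensen inequality for the convex function `t ↦ 1/t`: the weighted mean of `1/t j` exceeds
the reciprocal of the weighted mean of `t j`. Jensen is realised through the tangent line
of `1/t` at the mean, which keeps the argument to a comparison of two series.
-/

section TangentLine

variable {t m : ℝ}

lemma one_div_sub_two_div_sub_div_sq (ht : t ≠ 0) (hm : m ≠ 0) :
    1 / t - (2 / m - t / m ^ 2) = (t - m) ^ 2 / (t * m ^ 2) := by
  field_simp
  ring

lemma two_div_sub_div_sq_le_one_div (ht : 0 < t) (hm : m ≠ 0) : 2 / m - t / m ^ 2 ≤ 1 / t := by
  have := one_div_sub_two_div_sub_div_sq ht.ne' hm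
  have : 0 ≤ (t - m) ^ 2 / (t * m ^ 2) := by positivity
  linarith

lemma two_div_sub_div_sq_lt_one_div (ht : 0 < t) (hm : m ≠ 0) (htm : t ≠ m) :
    2 / m - t / m ^ 2 < 1 / t := by
  have := one_div_sub_two_div_sub_div_sq ht.ne' hm
  have : 0 < (t - m) ^ 2 / (t * m ^ 2) := by
    have : t - m ≠ 0 := sub_ne_zero.mpr htm
    positivity
  linarith

end TangentLine

theorem div_lt_tsum_div {ι : Type*} {w t : ι → ℝ} {W m : ℝ} (hw : ∀ j, 0 ≤ w j)
    (ht : ∀ j, 0 < t j) (hm : m ≠ 0) (hW : HasSum w W)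
    (hwt : HasSum (fun j => w j * t j) (W * m)) (hs : Summable fun j => w j / t j)
    {i : ι} (hwi : 0 < w i) (hti : t i ≠ m) :
    W / m < ∑' j, w j / t j := by
  have htangent : HasSum (fun j => w j * (2 / m - t j / m ^ 2)) (W / m) := by
    convert! (hW.mul_right (2 / m)).sub (hwt.div_const (m ^ 2)) using 1
    · ext j
      ring
    · field_simp
      ring
  refine hasSum_lt (i := i) (fun j => ?_) ?_ htangent hs.hasSum
  · rw [← mul_one_div (w j) (t j)]
    exact mul_le_mul_of_nonneg_left (two_div_sub_div_sq_le_one_div (ht j) hm) (hw j)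
  · rw [← mul_one_div (w i) (t i)]
    exact mul_lt_mul_of_pos_left (two_div_sub_div_sq_lt_one_div (ht i) hm hti) hwi

section GeometricWeights

variable {α : ℝ}

lemma hasSum_geometric_weights (hα : 0 ≤ α) :
    HasSum (fun j : ℕ => (α / (α + 1)) ^ (j + 1)) α := by
  have hr : α / (α + 1) < 1 := (div_lt_one (by positivity)).mpr (lt_add_one α)
  convert! (hasSum_geometric_of_lt_one (by positivity) hr).mul_left (α / (α + 1)) using 1
  · ext j
    ring
  · field_simp
    ring

lemma hasSum_geometric_weights_mul (hα : 0 ≤ α) (x : ℝ) :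
    HasSum (fun j : ℕ => (α / (α + 1)) ^ (j + 1) * (x + ((j : ℝ) + 1)))
      (α * (x + α + 1)) := by
  set r := α / (α + 1)
  have hr : r < 1 := (div_lt_one (by positivity)).mpr (lt_add_one α)
  have hr' : ‖r‖ < 1 := by rw [Real.norm_of_nonneg (by positivity)]; exact hr
  convert! ((hasSum_geometric_of_lt_one (by positivity) hr).mul_left (r * (x + 1))).add
    ((hasSum_coe_mul_geometric_of_norm_lt_one hr').mul_left r) using 1
  · ext j
    ring
  · simp only [r]
    field_simp
    ring

end GeometricWeights

/-- The function `g(α,x) = ((x+α+1)/α) · Σ_{j≥1} (α/(α+1))^j / (x+j)` from the appendix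
satisfies `g(α,x) > 1` for all `α > 0`, `x > 0`. -/
theorem g_gt_one (α x : ℝ) (hα : 0 < α) (hx : 0 < x) :
    1 < ((x + α + 1) / α) *
      ∑' j : ℕ, (α / (α + 1)) ^ (j + 1) * (1 / (x + ((j : ℝ) + 1))) := by
  have ht : ∀ j : ℕ, 0 < x + ((j : ℝ) + 1) := fun j => by positivity
  have hW := hasSum_geometric_weights hα.le
  have hs : Summable fun j : ℕ => (α / (α + 1)) ^ (j + 1) / (x + ((j : ℝ) + 1)) :=
    (hW.summable.div_const x).of_nonneg_of_le (fun j => by have := ht j; positivity)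
      (fun j => div_le_div_of_nonneg_left (by positivity) hx (by linarith [ht j]))
  have hD : 0 < x + α + 1 := by positivity
  have hjensen := div_lt_tsum_div (i := 0) (fun j => by positivity) ht hD.ne' hW
    (hasSum_geometric_weights_mul hα.le x) hs (by positivity)
    (by simp only [Nat.cast_zero, zero_add]; linarith)
  simp only [mul_one_div]
  rwa [← div_lt_iff₀' (by positivity), one_div_div]
end

section
/- For α > 0 and x > 0 define g(α,x) = ((x+α+1)/α) · Σ_{j=1}^{∞} (α/(α+1))^j · 1/(x+j). For all α > 0, x > 0 and 0 ≤ ε ≤ 1: if g(α,x) ≥ 1−ε, then g(α,x−1) > 1−ε. -/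
/-- Monotone propagation step for `g(α,x) = ((x+α+1)/α) · Σ_{j≥1} (α/(α+1))^j / (x+j)`:
if `g(α,x) ≥ 1−ε` then `g(α,x−1) > 1−ε`, for `0 ≤ ε ≤ 1`. -/
theorem g_propagation (α x ε : ℝ) (hα : 0 < α) (hx : 0 < x)
    (hε0 : 0 ≤ ε) (hε1 : ε ≤ 1)
    (h : 1 - ε ≤ ((x + α + 1) / α) *
      ∑' j : ℕ, (α / (α + 1)) ^ (j + 1) * (1 / (x + ((j : ℝ) + 1)))) :
    1 - ε < (((x - 1) + α + 1) / α) *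
      ∑' j : ℕ, (α / (α + 1)) ^ (j + 1) * (1 / ((x - 1) + ((j : ℝ) + 1))) := by
  have hα1 : (0:ℝ) < α + 1 := by linarith
  set r : ℝ := α / (α + 1) with hrdef
  have hr0 : 0 < r := div_pos hα hα1
  have hr1 : r < 1 := (div_lt_one hα1).mpr (by linarith)
  have hgeo : Summable (fun j : ℕ => r ^ j * (1 / x)) :=
    (summable_geometric_of_lt_one hr0.le hr1).mul_right _
  have hj : ∀ j : ℕ, (0:ℝ) ≤ (j : ℝ) := fun j => Nat.cast_nonneg j
  have hsum : Summable (fun j : ℕ => r ^ (j + 1) * (1 / (x + ((j : ℝ) + 1)))) := by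
    refine Summable.of_nonneg_of_le (fun j => ?_) (fun j => ?_) hgeo
    · have := hj j
      have : (0:ℝ) < x + ((j : ℝ) + 1) := by linarith
      positivity
    · have hxj : (0:ℝ) < x + ((j : ℝ) + 1) := by have := hj j; linarith
      have h1 : (1 : ℝ) / (x + ((j : ℝ) + 1)) ≤ 1 / x := by
        apply one_div_le_one_div_of_le hx
        have := hj j; linarith
      have h2 : r ^ (j + 1) ≤ r ^ j := by
        apply pow_le_pow_of_le_one hr0.le hr1.le; omega
      have := mul_le_mul h2 h1 (by positivity) (by positivity)
      linarith
  have hsum' : Summable (fun j : ℕ => r ^ (j + 1) * (1 / ((x - 1) + ((j : ℝ) + 1)))) := by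
    refine Summable.of_nonneg_of_le (fun j => ?_) (fun j => ?_) hgeo
    · have := hj j
      have : (0:ℝ) < (x - 1) + ((j : ℝ) + 1) := by linarith
      positivity
    · have hxj : (0:ℝ) < (x - 1) + ((j : ℝ) + 1) := by have := hj j; linarith
      have h1 : (1 : ℝ) / ((x - 1) + ((j : ℝ) + 1)) ≤ 1 / x := by
        apply one_div_le_one_div_of_le hx
        have := hj j; linarith
      have h2 : r ^ (j + 1) ≤ r ^ j := by
        apply pow_le_pow_of_le_one hr0.le hr1.le; omega
      have := mul_le_mul h2 h1 (by positivity) (by positivity)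
      linarith
  set S : ℝ := ∑' j : ℕ, r ^ (j + 1) * (1 / (x + ((j : ℝ) + 1))) with hSdef
  have hS0 : 0 ≤ S := by
    apply tsum_nonneg
    intro j
    have : (0:ℝ) < x + ((j : ℝ) + 1) := by have := hj j; linarith
    positivity
  have key : (∑' j : ℕ, r ^ (j + 1) * (1 / ((x - 1) + ((j : ℝ) + 1)))) = r * (1 / x) + r * S := by
    rw [Summable.tsum_eq_zero_add hsum']
    congr 1
    · norm_num
    · rw [← tsum_mul_left]
      apply tsum_congr
      intro j
      push_cast
      rw [show (x - 1) + (((j : ℝ) + 1) + 1) = x + ((j : ℝ) + 1) by ring]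
      ring
  rw [key]
  have hS : α * (1 - ε) ≤ (x + α + 1) * S := by
    rw [div_mul_eq_mul_div, le_div_iff₀ hα] at h
    linarith [h]
  rw [hrdef, div_mul_eq_mul_div, lt_div_iff₀ hα]
  have hx1 : (0:ℝ) < x + α + 1 := by linarith
  have expand : (x - 1 + α + 1) * (α / (α + 1) * (1 / x) + α / (α + 1) * S)
      = (x + α) * α / ((α + 1) * x) + (x + α) * α / (α + 1) * S := by
    field_simp
    ring
  rw [expand]
  have h1 : (x + α) * α / (α + 1) * (α * (1 - ε) / (x + α + 1)) ≤ (x + α) * α / (α + 1) * S := by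
    apply mul_le_mul_of_nonneg_left _ (by positivity)
    rw [div_le_iff₀ hx1]
    linarith
  have h2 : (1 - ε) * α <
      (x + α) * α / ((α + 1) * x) + (x + α) * α / (α + 1) * (α * (1 - ε) / (x + α + 1)) := by
    rw [← sub_pos]
    have hd : (x + α) * α / ((α + 1) * x) + (x + α) * α / (α + 1) * (α * (1 - ε) / (x + α + 1))
        - (1 - ε) * α
        = ((x + α) * α * (x + α + 1) + (x + α) * α * (α * (1 - ε)) * x
            - (1 - ε) * α * ((α + 1) * x) * (x + α + 1)) / ((α + 1) * x * (x + α + 1)) := by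
      field_simp
    rw [hd]
    apply div_pos _ (by positivity)
    nlinarith [mul_nonneg hε0 (mul_nonneg hx.le (by linarith : (0:ℝ) ≤ x + 2*α + 1)),
      mul_pos hα (mul_pos hα hα1), mul_pos hx hα]
  linarith
end

section
/- For all real α > 0, x > 0 and q ∈ [0,1), ( (α+1+x)/(α(1−q)) + x·q·α ) · Σ_{j=1}^{∞} ( α(1−q)/(α+1) )^j · 1/(x+j) ≥ 1 − αq. -/
/-!
Since `1 / (x + j + 1) ≥ ((x + 1) / (x + 2)) ^ j / (x + 1)`, the series is bounded below by a
geometric series with ratio `r s`, where `r = α (1 - q) / (α + 1)` and `s = (x + 1) / (x + 2)`.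
Summing it in closed form leaves a rational inequality whose cleared form is
`(1 - α q) (x + 1) D ≤ (α + 1 + x + α² x q (1 - q)) (x + 2)` with `D = α + x + 2 + α q (x + 1)`;
the difference of the two sides is
`α + α q (α + 1) (x + 1) + α² q² (x + 1)² + α² q (1 - q) x (x + 2) ≥ 0`.
-/

lemma add_one_div_add_two_pow_mul_le {x : ℝ} (hx : -1 ≤ x) (j : ℕ) :
    ((x + 1) / (x + 2)) ^ j * (x + ((j : ℝ) + 1)) ≤ x + 1 := by
  induction j with
  | zero => simp
  | succ n ih =>
    have hstep : (x + 1) / (x + 2) * (x + ((n : ℝ) + 2)) ≤ x + ((n : ℝ) + 1) := by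
      rw [div_mul_eq_mul_div, div_le_iff₀ (by linarith)]
      nlinarith [n.cast_nonneg (α := ℝ)]
    calc ((x + 1) / (x + 2)) ^ (n + 1) * (x + ((n + 1 : ℕ) + 1 : ℝ))
        = ((x + 1) / (x + 2)) ^ n * ((x + 1) / (x + 2) * (x + ((n : ℝ) + 2))) := by
          push_cast; ring
      _ ≤ ((x + 1) / (x + 2)) ^ n * (x + ((n : ℝ) + 1)) :=
          mul_le_mul_of_nonneg_left hstep (pow_nonneg (div_nonneg (by linarith) (by linarith)) n)
      _ ≤ x + 1 := ih

lemma add_succ_pos {x : ℝ} (hx : -1 < x) (j : ℕ) : 0 < x + ((j : ℝ) + 1) := by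
  linarith [j.cast_nonneg (α := ℝ)]

lemma add_one_div_add_two_pow_div_le {x : ℝ} (hx : -1 < x) (j : ℕ) :
    ((x + 1) / (x + 2)) ^ j / (x + 1) ≤ 1 / (x + ((j : ℝ) + 1)) := by
  rw [div_le_div_iff₀ (by linarith) (add_succ_pos hx j), one_mul]
  exact add_one_div_add_two_pow_mul_le hx.le j

lemma summable_pow_succ_mul_one_div_add {r x : ℝ} (hr0 : 0 ≤ r) (hr1 : r < 1) (hx : -1 < x) :
    Summable fun j : ℕ => r ^ (j + 1) * (1 / (x + ((j : ℝ) + 1))) := by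
  refine Summable.of_nonneg_of_le
    (fun j => mul_nonneg (pow_nonneg hr0 _) (one_div_nonneg.2 (add_succ_pos hx j).le)) (fun j => ?_)
    (((summable_nat_add_iff 1).mpr (summable_geometric_of_lt_one hr0 hr1)).mul_right (1 / (x + 1)))
  gcongr
  · linarith
  · exact le_add_of_nonneg_left j.cast_nonneg

lemma div_le_tsum_pow_succ_mul_one_div_add {r x : ℝ} (hr0 : 0 ≤ r) (hr1 : r < 1) (hx : -1 < x) :
    r / ((x + 1) * (1 - r * ((x + 1) / (x + 2)))) ≤
      ∑' j : ℕ, r ^ (j + 1) * (1 / (x + ((j : ℝ) + 1))) := by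
  set s := (x + 1) / (x + 2)
  have hs0 : 0 ≤ s := div_nonneg (by linarith) (by linarith)
  have hs1 : s < 1 := (div_lt_one (by linarith)).mpr (by linarith)
  have hrs1 : r * s < 1 := by nlinarith
  have hterm (j : ℕ) : r / (x + 1) * (r * s) ^ j ≤ r ^ (j + 1) * (1 / (x + ((j : ℝ) + 1))) :=
    calc r / (x + 1) * (r * s) ^ j
        = r ^ (j + 1) * (s ^ j / (x + 1)) := by rw [mul_pow, pow_succ]; ring
      _ ≤ r ^ (j + 1) * (1 / (x + ((j : ℝ) + 1))) :=
          mul_le_mul_of_nonneg_left (add_one_div_add_two_pow_div_le hx j) (pow_nonneg hr0 _)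
  calc r / ((x + 1) * (1 - r * s)) = ∑' j : ℕ, r / (x + 1) * (r * s) ^ j := by
        rw [tsum_mul_left, tsum_geometric_of_lt_one (by positivity) hrs1, div_mul_eq_div_div,
          div_eq_mul_inv]
    _ ≤ _ := Summable.tsum_le_tsum hterm
        ((summable_geometric_of_lt_one (by positivity) hrs1).mul_left _)
        (summable_pow_succ_mul_one_div_add hr0 hr1 hx)

lemma one_sub_mul_le_mul_div_one_sub {α x q : ℝ} (hα : 0 < α) (hx : 0 ≤ x)
    (hq0 : 0 ≤ q) (hq1 : q < 1) :
    1 - α * q ≤ ((α + 1 + x) / (α * (1 - q)) + x * q * α) *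
      (α * (1 - q) / (α + 1) / ((x + 1) * (1 - α * (1 - q) / (α + 1) * ((x + 1) / (x + 2))))) := by
  set D := α + x + 2 + α * q * (x + 1)
  have hD : 0 < D := by positivity
  have hq : 0 < 1 - q := by linarith
  have hcleared :
      (1 - α * q) * ((x + 1) * D) ≤ (α + 1 + x + α ^ 2 * x * q * (1 - q)) * (x + 2) := by
    have hP : 0 ≤ α + α * q * (α + 1) * (x + 1) + α ^ 2 * q ^ 2 * (x + 1) ^ 2
        + α ^ 2 * q * (1 - q) * x * (x + 2) := by positivity
    linear_combination hP
  have hone_sub : 1 - α * (1 - q) / (α + 1) * ((x + 1) / (x + 2)) = D / ((α + 1) * (x + 2)) := by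
    field_simp
    ring
  calc 1 - α * q = (1 - α * q) * ((x + 1) * D) / ((x + 1) * D) := by field_simp
    _ ≤ (α + 1 + x + α ^ 2 * x * q * (1 - q)) * (x + 2) / ((x + 1) * D) := by gcongr
    _ = _ := by
        rw [hone_sub]
        field_simp

/-- Appendix inequality for the case `q > 0` in the proof of Lemma 2 with constant
reward: `g(α,x,q) ≥ 1 − αq`. -/
theorem g_q_inequality (α x q : ℝ) (hα : 0 < α) (hx : 0 < x)
    (hq0 : 0 ≤ q) (hq1 : q < 1) :
    1 - α * q ≤ ((α + 1 + x) / (α * (1 - q)) + x * q * α) *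
      ∑' j : ℕ, (α * (1 - q) / (α + 1)) ^ (j + 1) * (1 / (x + ((j : ℝ) + 1))) := by
  have hq : 0 < 1 - q := by linarith
  have hr0 : 0 ≤ α * (1 - q) / (α + 1) := by positivity
  have hr1 : α * (1 - q) / (α + 1) < 1 := (div_lt_one (by linarith)).mpr (by nlinarith)
  calc 1 - α * q ≤ _ := one_sub_mul_le_mul_div_one_sub hα hx.le hq0 hq1
    _ ≤ _ := by
        gcongr
        exact div_le_tsum_pow_succ_mul_one_div_add hr0 hr1 (by linarith)
end

section
/- Let C > 0, z ∈ (0,1), q ∈ [0,1), and 0 < δ₁ < C·z·(1−q). Set s = 1−z+zq, a₀ = C, b₀ = (1−q)(1−z)(C−δ₁)/s, and d₀ = (C−δ₁)/s. Then d₀ > a₀, and for every ε with 0 < ε < δ₁(1−z)s/((1−q)C − δ₁), one has (d₀−a₀)/(d₀−a₀+b₀) < z − ε. -/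
/-!
With `s = 1 - z + z q`, `N = C z (1 - q) - δ₁` and `B = (1 - q)(1 - z)(C - δ₁)` one has
`d₀ - a₀ = N / s` and `b₀ = B / s`, so the common factor `1 / s` cancels and the fixed-point
quantity is `N / (N + B)`. Its distance to `z` is exactly `δ₁ (1 - z) s / (N + B)`, and
`N + B = (1 - q) C - δ₁ - (1 - q)(1 - z) δ₁` is smaller than `(1 - q) C - δ₁`, so this gap
exceeds the admissible bound on `ε`.
-/

section BaseStep

variable {C z q δ : ℝ}

lemma one_sub_add_mul_pos (hz0 : 0 ≤ z) (hz1 : z < 1) (hq0 : 0 ≤ q) : 0 < 1 - z + z * q := by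
  linarith [mul_nonneg hz0 hq0]

lemma reward_gap_eq (hs : 1 - z + z * q ≠ 0) :
    (C - δ) / (1 - z + z * q) - C = (C * z * (1 - q) - δ) / (1 - z + z * q) := by
  field_simp
  ring

lemma fixedPoint_gap_eq
    (hNB : C * z * (1 - q) - δ + (1 - q) * (1 - z) * (C - δ) ≠ 0) :
    z - (C * z * (1 - q) - δ) / (C * z * (1 - q) - δ + (1 - q) * (1 - z) * (C - δ))
      = δ * (1 - z) * (1 - z + z * q)
        / (C * z * (1 - q) - δ + (1 - q) * (1 - z) * (C - δ)) := by
  rw [eq_div_iff hNB, sub_mul, div_mul_cancel₀ _ hNB]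
  ring

end BaseStep

/-- Base step of the induction in the proof of Lemma 2: for the reward function equal
to `C` at minimum hop count and `C−δ₁` at larger hop counts, `d₀ > a₀` and the
fixed-point quantity `(d₀−a₀)/(d₀−a₀+b₀)` is strictly below `z − ε`. -/
theorem base_step_induction (C z q δ₁ s a₀ b₀ d₀ : ℝ)
    (hC : 0 < C) (hz0 : 0 < z) (hz1 : z < 1) (hq0 : 0 ≤ q) (hq1 : q < 1)
    (hδ0 : 0 < δ₁) (hδ : δ₁ < C * z * (1 - q))
    (hs : s = 1 - z + z * q)
    (ha : a₀ = C)
    (hb : b₀ = (1 - q) * (1 - z) * (C - δ₁) / s)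
    (hd : d₀ = (C - δ₁) / s) :
    a₀ < d₀ ∧ ∀ ε : ℝ, 0 < ε → ε < δ₁ * (1 - z) * s / ((1 - q) * C - δ₁) →
      (d₀ - a₀) / (d₀ - a₀ + b₀) < z - ε := by
  subst a₀ b₀ d₀
  have hs0 : 0 < s := hs ▸ one_sub_add_mul_pos hz0.le hz1 hq0
  have hN : 0 < C * z * (1 - q) - δ₁ := by linarith
  have hB : 0 < (1 - q) * (1 - z) * (C - δ₁) := by
    have : C * z * (1 - q) < C := by nlinarith [mul_pos hz0 (sub_pos.2 hq1)]
    exact mul_pos (mul_pos (by linarith) (by linarith)) (by linarith)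
  have hgain : (C - δ₁) / s - C = (C * z * (1 - q) - δ₁) / s :=
    hs ▸ reward_gap_eq (hs ▸ hs0.ne')
  refine ⟨by linarith [div_pos hN hs0], fun ε _ hε => ?_⟩
  rw [hgain, ← add_div, div_div_div_cancel_right₀ hs0.ne']
  have hgap := fixedPoint_gap_eq (add_pos hN hB).ne'
  rw [← hs] at hgap
  have hbound : δ₁ * (1 - z) * s / ((1 - q) * C - δ₁) < δ₁ * (1 - z) * s
      / (C * z * (1 - q) - δ₁ + (1 - q) * (1 - z) * (C - δ₁)) :=
    div_lt_div_of_pos_left (by positivity) (add_pos hN hB)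
      (by linarith [mul_pos (mul_pos (sub_pos.2 hq1) (sub_pos.2 hz1)) hδ0])
  linarith
end

section
/- Let ẇ > 0 and ŵ > 0 be real, let q ∈ [0,1], let Δ : ℕ → (0,∞) be a non-increasing sequence, and set z = ẇ/(ẇ+ŵ). Then Σ_{i=0}^{∞} ((1−q)z)^i · [ (ŵ/ẇ) · (ẇ + iΔ(i))/(ẇ + iΔ(i) + ŵ + Δ(i)) + q · (ẇ + iΔ(i+1))/(ẇ + iΔ(i+1) + ŵ) ] ≤ 1. -/
/-- Monotonicity of `x ↦ (wd+x)/(wd+x+wh)`. -/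
lemma gmono (wd wh x y : ℝ) (hwd : 0 < wd) (hwh : 0 < wh) (hx : 0 ≤ x) (hxy : x ≤ y) :
    (wd + x) / (wd + x + wh) ≤ (wd + y) / (wd + y + wh) := by
  rw [div_le_div_iff₀ (by linarith) (by linarith)]
  nlinarith

/-- The core algebraic inequality (single reward value `Δ`, `a = i·Δ`). -/
lemma key_ineq (wd wh q Δ a : ℝ) (hwd : 0 < wd) (hwh : 0 < wh)
    (hq0 : 0 ≤ q) (hq1 : q ≤ 1) (hΔ : 0 < Δ) (ha : 0 ≤ a) :
    (wh / wd) * ((wd + a) / (wd + a + wh + Δ)) + q * ((wd + a) / (wd + a + wh))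
      + (1 - q) * ((wd + a + Δ) / (wd + a + Δ + wh))
      ≤ (wd + a) / (wd + a + wh) * ((wd + wh) / wd) := by
  have hD1 : (0:ℝ) < wd + a + wh := by linarith
  have hD2 : (0:ℝ) < wd + a + wh + Δ := by linarith
  have hid : (wd + a) / (wd + a + wh) * ((wd + wh) / wd)
      - ((wh / wd) * ((wd + a) / (wd + a + wh + Δ)) + q * ((wd + a) / (wd + a + wh))
        + (1 - q) * ((wd + a + Δ) / (wd + a + Δ + wh)))
      = wh * Δ * (a + q * wd) / (wd * (wd + a + wh) * (wd + a + wh + Δ)) := by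
    have h3 : wd + a + Δ + wh = wd + a + wh + Δ := by ring
    rw [h3]
    field_simp
    ring
  have hpos : 0 ≤ wh * Δ * (a + q * wd) / (wd * (wd + a + wh) * (wd + a + wh + Δ)) := by
    apply div_nonneg
    · have h1 : 0 ≤ a + q * wd := by nlinarith
      positivity
    · positivity
  linarith

/-- Key algebraic property in the proof of Lemma 2 (multiple-reward model): with
`wd = ẇ`, `wh = ŵ` the weights of the merged β-edge and α*-edge, `q` the non-return
probability, `Δ` the non-increasing positive reward sequence, and `z = ẇ/(ẇ+ŵ)`,
the conditional expectation of the normalized β-edge weight after one walk is at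
most `z`. -/
theorem lemma2_multiple_reward_inequality
    (wd wh q : ℝ) (Δ : ℕ → ℝ)
    (hwd : 0 < wd) (hwh : 0 < wh)
    (hq0 : 0 ≤ q) (hq1 : q ≤ 1)
    (hΔpos : ∀ i, 0 < Δ i) (hΔmono : Antitone Δ)
    (z : ℝ) (hz : z = wd / (wd + wh)) :
    ∑' i : ℕ, ((1 - q) * z) ^ i *
      ((wh / wd) * ((wd + (i : ℝ) * Δ i) / (wd + (i : ℝ) * Δ i + wh + Δ i)) +
        q * ((wd + (i : ℝ) * Δ (i + 1)) / (wd + (i : ℝ) * Δ (i + 1) + wh))) ≤ 1 := by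
  have hwdh : (0:ℝ) < wd + wh := by linarith
  have hzpos : 0 < z := by rw [hz]; positivity
  set r : ℝ := (1 - q) * z with hr
  have hr0 : 0 ≤ r := mul_nonneg (by linarith) hzpos.le
  -- the summand
  set t : ℕ → ℝ := fun i => r ^ i *
      ((wh / wd) * ((wd + (i : ℝ) * Δ i) / (wd + (i : ℝ) * Δ i + wh + Δ i)) +
        q * ((wd + (i : ℝ) * Δ (i + 1)) / (wd + (i : ℝ) * Δ (i + 1) + wh))) with ht
  -- the supermartingale potential
  set c : ℕ → ℝ := fun i =>
      r ^ i * ((wd + (i : ℝ) * Δ i) / (wd + (i : ℝ) * Δ i + wh) * ((wd + wh) / wd))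
    with hcdef
  have hc0 : c 0 = 1 := by
    simp only [hcdef, Nat.cast_zero, pow_zero, zero_mul, add_zero, one_mul]
    field_simp
  have hcnonneg : ∀ n, 0 ≤ c n := by
    intro n
    have h1 : (0:ℝ) ≤ (n : ℝ) * Δ n := mul_nonneg (Nat.cast_nonneg n) (hΔpos n).le
    have h2 : (0:ℝ) < wd + (n : ℝ) * Δ n + wh := by linarith
    have h3 : (0:ℝ) ≤ wd + (n : ℝ) * Δ n := by linarith
    positivity
  have htnonneg : ∀ n, 0 ≤ t n := by
    intro n
    have h1 : (0:ℝ) ≤ (n : ℝ) * Δ n := mul_nonneg (Nat.cast_nonneg n) (hΔpos n).le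
    have h1' : (0:ℝ) ≤ (n : ℝ) * Δ (n + 1) := mul_nonneg (Nat.cast_nonneg n) (hΔpos (n + 1)).le
    have h2 : (0:ℝ) < wd + (n : ℝ) * Δ n + wh + Δ n := by have := hΔpos n; linarith
    have h3 : (0:ℝ) < wd + (n : ℝ) * Δ (n + 1) + wh := by linarith
    have h4 : (0:ℝ) ≤ wd + (n : ℝ) * Δ n := by linarith
    have h5 : (0:ℝ) ≤ wd + (n : ℝ) * Δ (n + 1) := by linarith
    positivity
  -- telescoping bound on each term
  have hstep : ∀ i : ℕ, t i ≤ c i - c (i + 1) := by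
    intro i
    have hΔ1 : 0 < Δ i := hΔpos i
    have hΔ2 : 0 < Δ (i + 1) := hΔpos (i + 1)
    have hΔ21 : Δ (i + 1) ≤ Δ i := hΔmono (Nat.le_succ i)
    have hi0 : (0:ℝ) ≤ (i : ℝ) := Nat.cast_nonneg i
    have ha : (0:ℝ) ≤ (i : ℝ) * Δ i := mul_nonneg hi0 hΔ1.le
    -- rewrite c (i+1) : r^(i+1) * u_{i+1} = r^i * ((1-q) * g((i+1)Δ(i+1)))
    have hcsucc : c (i + 1) = r ^ i *
        ((1 - q) * ((wd + ((i : ℝ) + 1) * Δ (i + 1)) / (wd + ((i : ℝ) + 1) * Δ (i + 1) + wh))) := by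
      simp only [hcdef, Nat.cast_add, Nat.cast_one, pow_succ]
      have hzval : z * ((wd + wh) / wd) = 1 := by
        rw [hz]; field_simp
      calc r ^ i * r * ((wd + ((i:ℝ) + 1) * Δ (i + 1)) / (wd + ((i:ℝ) + 1) * Δ (i + 1) + wh)
              * ((wd + wh) / wd))
          = r ^ i * ((1 - q) * ((wd + ((i:ℝ) + 1) * Δ (i + 1)) / (wd + ((i:ℝ) + 1) * Δ (i + 1) + wh))
              * (z * ((wd + wh) / wd))) := by rw [hr]; ring
        _ = _ := by rw [hzval]; ring
    have hcore : (wh / wd) * ((wd + (i : ℝ) * Δ i) / (wd + (i : ℝ) * Δ i + wh + Δ i)) +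
        q * ((wd + (i : ℝ) * Δ (i + 1)) / (wd + (i : ℝ) * Δ (i + 1) + wh)) +
        (1 - q) * ((wd + ((i : ℝ) + 1) * Δ (i + 1)) / (wd + ((i : ℝ) + 1) * Δ (i + 1) + wh))
        ≤ (wd + (i : ℝ) * Δ i) / (wd + (i : ℝ) * Δ i + wh) * ((wd + wh) / wd) := by
      have h1q : (0:ℝ) ≤ 1 - q := by linarith
      have m1 := gmono wd wh ((i : ℝ) * Δ (i + 1)) ((i : ℝ) * Δ i) hwd hwh
        (mul_nonneg hi0 hΔ2.le) (by nlinarith)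
      have m2 := gmono wd wh (((i : ℝ) + 1) * Δ (i + 1)) (((i : ℝ) + 1) * Δ i) hwd hwh
        (mul_nonneg (by linarith) hΔ2.le) (by nlinarith)
      have k := key_ineq wd wh q (Δ i) ((i : ℝ) * Δ i) hwd hwh hq0 hq1 hΔ1 ha
      have e1 : wd + ((i : ℝ) + 1) * Δ i = wd + (i : ℝ) * Δ i + Δ i := by ring
      rw [e1] at m2
      nlinarith [mul_le_mul_of_nonneg_left m1 hq0, mul_le_mul_of_nonneg_left m2 h1q]
    rw [hcsucc]
    simp only [hcdef, ht]
    rw [← mul_sub]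
    refine mul_le_mul_of_nonneg_left ?_ (pow_nonneg hr0 i)
    linarith [hcore]
  -- conclude
  apply Real.tsum_le_of_sum_range_le htnonneg
  intro n
  calc ∑ i ∈ Finset.range n, t i ≤ ∑ i ∈ Finset.range n, (c i - c (i + 1)) :=
        Finset.sum_le_sum fun i _ => hstep i
    _ = c 0 - c n := Finset.sum_range_sub' c n
    _ ≤ 1 := by rw [hc0]; linarith [hcnonneg n]
end
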